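/- (Contraction preserves log canonicity) Let A be a log canonical system indexed by Fin (n+1) with n ≥ 1, and let e be an index with A e e = -1 such that for every i ≠ e either A i e = 0, or A i i ≤ -2 and A i e = 1 (e is contractible). Define the contracted matrix Ã, indexed by the indices different from e, by Ã i j = A i j + A i e * A j e. Then Ã is again a system (Ã is symmetric with integer entries, Ã i i ≤ -1 for all i, Ã i j ≥ 0 for i ≠ j, and as a real symmetric matrix Ã has at most one positive eigenvalue), and Ã is log canonical. -/

import Mathlib

open Matrix

/-- A real matrix is negative definite: `xᵀ A x < 0` for every nonzero `x`. -/
def NegDefMat {V : Type*} [Fintype V] (A : Matrix V V ℝ) : Prop :=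
  ∀ x : V → ℝ, x ≠ 0 → x ⬝ᵥ A.mulVec x < 0

/-- A real matrix is negative semidefinite: `xᵀ A x ≤ 0` for every `x`. -/
def NegSemidefMat {V : Type*} [Fintype V] (A : Matrix V V ℝ) : Prop :=
  ∀ x : V → ℝ, x ⬝ᵥ A.mulVec x ≤ 0

/-- A real symmetric matrix has at most one positive eigenvalue (with multiplicity). -/
def AtMostOnePosEig {V : Type*} [Fintype V] [DecidableEq V] (A : Matrix V V ℝ) : Prop :=
  ∃ hA : A.IsHermitian, Fintype.card {i // 0 < hA.eigenvalues i} ≤ 1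

/-- The real matrix associated to an integer matrix. -/
def matReal {V : Type*} (A : Matrix V V ℤ) : Matrix V V ℝ := A.map Int.cast

/-- An at most hyperbolic system of vectors, encoded by its Gram matrix. -/
def IsSystem {V : Type*} [Fintype V] [DecidableEq V] (A : Matrix V V ℤ) : Prop :=
  Nonempty V ∧ A.IsSymm ∧ (∀ i, A i i ≤ -1) ∧ (∀ i j, i ≠ j → 0 ≤ A i j) ∧
    AtMostOnePosEig (matReal A)

/-- The graph of a system: an edge between `i ≠ j` iff `A i j > 0`. -/
def sysGraph {V : Type*} (A : Matrix V V ℤ) : SimpleGraph V :=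
  SimpleGraph.fromRel fun i j => 0 < A i j

/-- The principal submatrix of `A` on a subset `s` of indices. -/
def subMat {V : Type*} (A : Matrix V V ℤ) (s : Finset V) :
    Matrix {i // i ∈ s} {i // i ∈ s} ℤ :=
  A.submatrix Subtype.val Subtype.val

/-- A system is elliptic if its Gram matrix is negative definite over `ℝ`. -/
def IsElliptic {V : Type*} [Fintype V] (A : Matrix V V ℤ) : Prop :=
  NegDefMat (matReal A)

/-- A system is hyperbolic if it is not negative semidefinite over `ℝ`. -/
def IsHyperbolic {V : Type*} [Fintype V] (A : Matrix V V ℤ) : Prop :=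
  ¬ NegSemidefMat (matReal A)

/-- A system is Lanner if it is hyperbolic but every proper subsystem
is negative semidefinite. -/
def IsLanner {V : Type*} [Fintype V] [DecidableEq V] (A : Matrix V V ℤ) : Prop :=
  IsHyperbolic A ∧ ∀ s : Finset V, s ≠ Finset.univ → NegSemidefMat (matReal (subMat A s))

/-- A system is connected parabolic if it is negative semidefinite but not negative
definite over `ℝ` and its graph is connected. -/
def IsConnParabolic {V : Type*} [Fintype V] (A : Matrix V V ℤ) : Prop :=
  NegSemidefMat (matReal A) ∧ ¬ NegDefMat (matReal A) ∧ (sysGraph A).Connected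

/-- A system is log canonical if for every subset `s` of indices whose principal
submatrix is negative definite, the canonical coefficients `α` (the unique solution of
`∑_{j ∈ s} A i j * α j = -A i i - 2` for `i ∈ s`) satisfy `α i ≥ -1` for all `i ∈ s`,
with strict inequality whenever `i` is joined, within the graph of `A` restricted to `s`,
to some `e ∈ s` with `A e e = -1`. -/
def IsLogCanonical {V : Type*} [Fintype V] [DecidableEq V] (A : Matrix V V ℤ) : Prop :=
  ∀ s : Finset V, NegDefMat (matReal (subMat A s)) →
    ∀ α : V → ℝ, (∀ i ∈ s, ∑ j ∈ s, (A i j : ℝ) * α j = -(A i i : ℝ) - 2) →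
      (∀ i ∈ s, -1 ≤ α i) ∧
      (∀ i e : {x // x ∈ s}, A e.val e.val = -1 →
        ((sysGraph A).comap (Subtype.val : {x // x ∈ s} → V)).Reachable i e →
        -1 < α i.val)

/-- An index `e` of the first kind (`A e e = -1`) is contractible if every other
index `i` satisfies `A i e = 0`, or `A i i ≤ -2` and `A i e = 1`. -/
def Contractible {V : Type*} (A : Matrix V V ℤ) (e : V) : Prop :=
  ∀ i, i ≠ e → A i e = 0 ∨ (A i i ≤ -2 ∧ A i e = 1)

/-- A log canonical system is minimal if it contains no contractible element
of the first kind. -/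
def IsMinimal {V : Type*} (A : Matrix V V ℤ) : Prop :=
  ¬ ∃ e, A e e = -1 ∧ Contractible A e


/-!
Contracting `e` is dual to the linear map `x ↦ (x, ∑ i, A i e * x i)` from `ℝ^{V∖e}` to `ℝ^V`.
Since `A e e = -1`, completing the square in `y e` gives
`yᵀ A y = xᵀ Ã x - (y e - ∑ i, A i e * y i)²` for `x` the restriction of `y`, so the quadratic
form of `Ã` is the pullback of that of `A`, and pulling back cannot create a second positive
direction. If the principal submatrix of `Ã` on `s` is negative definite, so is that of `A` on
`s ∪ {e}`, and its canonical coefficients are those of `s` extended by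
`α e = 1 + ∑ i, A i e * α i` (this uses `A i e ∈ {0, 1}`). An edge of the graph of `Ã` missing
from that of `A` factors through `e`, and an index `f` with `Ã f f = -1` either already has
`A f f = -1` or is adjacent to `e`.
-/

section Inertia

variable {V : Type*} [Fintype V] [DecidableEq V] {M : Matrix V V ℝ}

lemma Matrix.IsHermitian.dotProduct_mulVec_eq_sum_eigenvalues (hM : M.IsHermitian)
    (y : V → ℝ) :
    y ⬝ᵥ M *ᵥ y =
      ∑ i, hM.eigenvalues i * ((star (hM.eigenvectorUnitary : Matrix V V ℝ) *ᵥ y) i) ^ 2 := by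
  conv_lhs => rw [hM.spectral_theorem]
  rw [Unitary.conjStarAlgAut_apply, ← mulVec_mulVec, ← mulVec_mulVec, dotProduct_mulVec,
    star_eq_conjTranspose, conjTranspose_eq_transpose_of_trivial, ← mulVec_transpose]
  simp only [dotProduct, mulVec_diagonal, Function.comp_apply, RCLike.ofReal_real_eq_id, id_eq]
  exact Finset.sum_congr rfl fun i _ => by ring

lemma AtMostOnePosEig.exists_dotProduct_mulVec_nonpos (hM : AtMostOnePosEig M)
    (u v : V → ℝ) :
    ∃ a b : ℝ, (a, b) ≠ 0 ∧ (a • u + b • v) ⬝ᵥ M *ᵥ (a • u + b • v) ≤ 0 := by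
  obtain ⟨hM, hcard⟩ := hM
  set U := star (hM.eigenvectorUnitary : Matrix V V ℝ) with hU
  obtain ⟨a, b, hab, hker⟩ : ∃ a b : ℝ, (a, b) ≠ 0 ∧
      ∀ i, 0 < hM.eigenvalues i → a * (U *ᵥ u) i + b * (U *ᵥ v) i = 0 := by
    by_cases hpos : ∃ k, 0 < hM.eigenvalues k
    · obtain ⟨k, hk⟩ := hpos
      have hk_unique : ∀ i, 0 < hM.eigenvalues i → i = k := fun i hi =>
        congrArg Subtype.val (Fintype.card_le_one_iff.mp hcard ⟨i, hi⟩ ⟨k, hk⟩)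
      by_cases huv : (U *ᵥ v) k = 0 ∧ (U *ᵥ u) k = 0
      · exact ⟨1, 0, by simp, fun i hi => by simp [hk_unique i hi, huv.2]⟩
      · refine ⟨(U *ᵥ v) k, -(U *ᵥ u) k, fun h => huv ?_, fun i hi => ?_⟩
        · simpa using Prod.ext_iff.mp h
        · rw [hk_unique i hi]; ring
    · exact ⟨1, 0, by simp, fun i hi => (hpos ⟨i, hi⟩).elim⟩
  refine ⟨a, b, hab, ?_⟩
  rw [hM.dotProduct_mulVec_eq_sum_eigenvalues, ← hU]
  refine Finset.sum_nonpos fun i _ => ?_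
  by_cases hi : 0 < hM.eigenvalues i
  · simp only [mulVec_add, mulVec_smul, Pi.add_apply, Pi.smul_apply, smul_eq_mul, hker i hi]
    simp
  · exact mul_nonpos_of_nonpos_of_nonneg (not_lt.mp hi) (sq_nonneg _)

lemma atMostOnePosEig_of_exists_dotProduct_mulVec_nonpos (hM : M.IsHermitian)
    (h : ∀ u v : V → ℝ, ∃ a b : ℝ, (a, b) ≠ 0 ∧
      (a • u + b • v) ⬝ᵥ M *ᵥ (a • u + b • v) ≤ 0) :
    AtMostOnePosEig M := by
  refine ⟨hM, not_lt.mp fun hcard => ?_⟩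
  obtain ⟨⟨j₁, hj₁⟩, ⟨j₂, hj₂⟩, hne⟩ := Fintype.exists_pair_of_one_lt_card hcard
  have hne : j₁ ≠ j₂ := fun h => hne (Subtype.ext h)
  obtain ⟨a, b, hab, hle⟩ := h (hM.eigenvectorBasis j₁) (hM.eigenvectorBasis j₂)
  -- on the span of two eigenvectors with positive eigenvalues the form is positive definite
  have hpos : 0 < hM.eigenvalues j₁ * a ^ 2 + hM.eigenvalues j₂ * b ^ 2 := by
    rcases (not_and_or.mp fun h' => hab (Prod.ext h'.1 h'.2)) with ha | hb
    · nlinarith [sq_pos_of_ne_zero ha, sq_nonneg b]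
    · nlinarith [sq_pos_of_ne_zero hb, sq_nonneg a]
  rw [hM.dotProduct_mulVec_eq_sum_eigenvalues, mulVec_add, mulVec_smul, mulVec_smul,
    hM.star_eigenvectorUnitary_mulVec, hM.star_eigenvectorUnitary_mulVec,
    Fintype.sum_eq_add j₁ j₂ hne (fun i hi => by simp [hi.1, hi.2])] at hle
  simp [hne, Ne.symm hne] at hle
  linarith

lemma AtMostOnePosEig.of_comp_linearMap {W : Type*} [Fintype W] [DecidableEq W]
    {N : Matrix W W ℝ} (hM : AtMostOnePosEig M) (hN : N.IsHermitian)
    (L : (W → ℝ) →ₗ[ℝ] (V → ℝ)) (hL : ∀ x, L x ⬝ᵥ M *ᵥ L x = x ⬝ᵥ N *ᵥ x) :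
    AtMostOnePosEig N :=
  atMostOnePosEig_of_exists_dotProduct_mulVec_nonpos hN fun u v => by
    obtain ⟨a, b, hab, hle⟩ := hM.exists_dotProduct_mulVec_nonpos (L u) (L v)
    exact ⟨a, b, hab, by rwa [← hL, map_add, map_smul, map_smul]⟩

end Inertia

section Submatrix

variable {V : Type*} [Fintype V]

lemma dotProduct_subMat_mulVec (A : Matrix V V ℤ) (s : Finset V) {y : V → ℝ}
    (hy : ∀ j ∉ s, y j = 0) :
    (fun i : s => y i) ⬝ᵥ matReal (subMat A s) *ᵥ (fun i : s => y i) =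
      y ⬝ᵥ matReal A *ᵥ y := by
  have hsum : ∀ f : V → ℝ, (∀ j ∉ s, f j = 0) → ∑ i : s, f i = ∑ i, f i := fun f hf =>
    (Finset.sum_coe_sort s f).trans
      (Finset.sum_subset (Finset.subset_univ s) fun j _ hj => hf j hj)
  simp only [dotProduct, mulVec, matReal, subMat, map_apply, submatrix_apply]
  rw [← hsum (fun i => y i * ∑ j, (A i j : ℝ) * y j) fun i hi => by simp [hy i hi]]
  exact Finset.sum_congr rfl fun i _ => by
    rw [hsum (fun j => (A i j : ℝ) * y j) fun j hj => by simp [hy j hj]]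

lemma negDefMat_subMat_iff (A : Matrix V V ℤ) (s : Finset V) :
    NegDefMat (matReal (subMat A s)) ↔
      ∀ y : V → ℝ, (∀ j ∉ s, y j = 0) → y ≠ 0 → y ⬝ᵥ matReal A *ᵥ y < 0 := by
  constructor
  · intro h y hy hy0
    rw [← dotProduct_subMat_mulVec A s hy]
    refine h _ fun h0 => hy0 (funext fun j => ?_)
    by_cases hj : j ∈ s
    · exact congrFun h0 ⟨j, hj⟩
    · exact hy j hj
  · classical
    intro h x hx
    let y : V → ℝ := fun j => if hj : j ∈ s then x ⟨j, hj⟩ else 0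
    have hy : ∀ j ∉ s, y j = 0 := fun j hj => dif_neg hj
    have hxy : (fun i : s => y i) = x := funext fun i => dif_pos i.2
    rw [← hxy, dotProduct_subMat_mulVec A s hy]
    exact h y hy fun h0 => hx (by rw [← hxy, h0]; rfl)

end Submatrix

namespace Matrix

lemma dotProduct_mulVec_eq_sum_sum {V : Type*} [Fintype V] (M : Matrix V V ℝ) (z : V → ℝ) :
    z ⬝ᵥ M *ᵥ z = ∑ i, ∑ j, z i * M i j * z j := by
  simp [dotProduct, mulVec, Finset.mul_sum, mul_assoc]

variable {V : Type*}

def contract (A : Matrix V V ℤ) (e : V) : Matrix {i // i ≠ e} {i // i ≠ e} ℤ :=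
  of fun i j => A i j + A i e * A j e

variable {A : Matrix V V ℤ}

lemma IsSymm.contract (hA : A.IsSymm) (e : V) : (A.contract e).IsSymm := by
  ext i j
  simp only [transpose_apply, Matrix.contract, of_apply, hA.apply]
  ring

variable {e : V}

lemma contract_apply_self_le_neg_one (hdiag : ∀ i, A i i ≤ -1) (hcon : Contractible A e)
    (i : {i // i ≠ e}) : A.contract e i i ≤ -1 := by
  rcases hcon i i.2 with h | ⟨h2, h1⟩ <;> simp only [Matrix.contract, of_apply] <;> grind

lemma contract_apply_nonneg (hoff : ∀ i j, i ≠ j → 0 ≤ A i j) {i j : {i // i ≠ e}}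
    (hij : i ≠ j) : 0 ≤ A.contract e i j :=
  add_nonneg (hoff _ _ (Subtype.val_injective.ne hij))
    (mul_nonneg (hoff _ _ i.2) (hoff _ _ j.2))

variable [Fintype V] [DecidableEq V]

lemma dotProduct_mulVec_eq_contract_sub_sq (hA : A.IsSymm) (he : A e e = -1) (y : V → ℝ) :
    y ⬝ᵥ matReal A *ᵥ y =
      (fun i : {i // i ≠ e} => y i) ⬝ᵥ matReal (A.contract e) *ᵥ (fun i => y i) -
        (y e - ∑ i : {i // i ≠ e}, (A i e : ℝ) * y i) ^ 2 := by
  set S := ∑ i : {i // i ≠ e}, (A i e : ℝ) * y i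
  set Q := ∑ i : {i // i ≠ e}, ∑ j : {i // i ≠ e}, y i * (A i j : ℝ) * y j
  have hcontract : (fun i : {i // i ≠ e} => y i) ⬝ᵥ matReal (A.contract e) *ᵥ (fun i => y i) =
      Q + S * S := by
    rw [dotProduct_mulVec_eq_sum_sum]
    simp only [matReal, contract, map_apply, of_apply, Int.cast_add, Int.cast_mul,
      mul_add, add_mul, Finset.sum_add_distrib, Q, S, Finset.sum_mul_sum]
    congr 1
    exact Finset.sum_congr rfl fun i _ => Finset.sum_congr rfl fun j _ => by ring
  have hrow : ∀ i, ∑ j, y i * (A i j : ℝ) * y j =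
      y i * A i e * y e + ∑ j : {j // j ≠ e}, y i * (A i j : ℝ) * y j := fun i =>
    Fintype.sum_eq_add_sum_subtype_ne _ e
  have hcol : ∑ j : {j // j ≠ e}, y e * (A e j : ℝ) * y j = y e * S := by
    rw [Finset.mul_sum]
    exact Finset.sum_congr rfl fun j _ => by rw [hA.apply j e]; ring
  have hrow_e : ∑ i : {i // i ≠ e}, y i * (A i e : ℝ) * y e = S * y e := by
    rw [Finset.sum_mul]
    exact Finset.sum_congr rfl fun i _ => by ring
  rw [hcontract, dotProduct_mulVec_eq_sum_sum, Fintype.sum_eq_add_sum_subtype_ne _ e]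
  simp only [matReal, map_apply, hrow, Finset.sum_add_distrib, he, hcol, hrow_e]
  push_cast
  ring

variable (A e) in
def contractLift : ({i // i ≠ e} → ℝ) →ₗ[ℝ] V → ℝ :=
  LinearMap.pi fun j =>
    if h : j = e then ∑ i : {i // i ≠ e}, (A i e : ℝ) • LinearMap.proj (R := ℝ) i
    else LinearMap.proj ⟨j, h⟩

lemma contractLift_apply_self (x : {i // i ≠ e} → ℝ) :
    contractLift A e x e = ∑ i : {i // i ≠ e}, (A i e : ℝ) * x i := by
  simp [contractLift]

lemma contractLift_apply_val (x : {i // i ≠ e} → ℝ) (i : {i // i ≠ e}) :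
    contractLift A e x i = x i := by
  simp [contractLift, i.2]

lemma atMostOnePosEig_contract (hA : A.IsSymm) (he : A e e = -1)
    (hpos : AtMostOnePosEig (matReal A)) : AtMostOnePosEig (matReal (A.contract e)) :=
  hpos.of_comp_linearMap (isHermitian_iff_isSymm.mpr ((hA.contract e).map _))
    (contractLift A e) fun x => by
      simp [dotProduct_mulVec_eq_contract_sub_sq hA he, contractLift_apply_self,
        contractLift_apply_val]

end Matrix

lemma IsSystem.contract {V : Type*} [Fintype V] [DecidableEq V] [Nontrivial V]
    {A : Matrix V V ℤ} {e : V} (hsys : IsSystem A) (he : A e e = -1)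
    (hcon : Contractible A e) : IsSystem (A.contract e) := by
  obtain ⟨-, hA, hdiag, hoff, hpos⟩ := hsys
  obtain ⟨i, hi⟩ := exists_ne e
  exact ⟨⟨⟨i, hi⟩⟩, hA.contract e, contract_apply_self_le_neg_one hdiag hcon,
    fun _ _ => contract_apply_nonneg hoff, atMostOnePosEig_contract hA he hpos⟩

lemma sysGraph_adj_iff {V : Type*} {A : Matrix V V ℤ} (hA : A.IsSymm) {i j : V} :
    (sysGraph A).Adj i j ↔ i ≠ j ∧ 0 < A i j := by
  rw [sysGraph, SimpleGraph.fromRel_adj, hA.apply, or_self]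

section LogCanonical

variable {V : Type*} [DecidableEq V]

def IsCanonicalCoeff (A : Matrix V V ℤ) (s : Finset V) (α : V → ℝ) : Prop :=
  ∀ i ∈ s, ∑ j ∈ s, (A i j : ℝ) * α j = -(A i i : ℝ) - 2

def liftInsert (e : V) (s : Finset {i // i ≠ e}) : Finset V :=
  insert e (s.map (Function.Embedding.subtype _))

def extendCoeff (A : Matrix V V ℤ) {e : V} (s : Finset {i // i ≠ e}) (α : {i // i ≠ e} → ℝ) :
    V → ℝ :=
  fun j => if h : j = e then 1 + ∑ i ∈ s, (A i e : ℝ) * α i else α ⟨j, h⟩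

variable {A : Matrix V V ℤ} {e : V} {s : Finset {i // i ≠ e}}

lemma mem_liftInsert_val {a : {i // i ≠ e}} : a.1 ∈ liftInsert e s ↔ a ∈ s := by
  simp [liftInsert, a.2]

lemma sum_liftInsert (f : V → ℝ) : ∑ j ∈ liftInsert e s, f j = f e + ∑ a ∈ s, f a := by
  rw [liftInsert, Finset.sum_insert (by simp), Finset.sum_map, Function.Embedding.coe_subtype]

lemma extendCoeff_self (α : {i // i ≠ e} → ℝ) :
    extendCoeff A s α e = 1 + ∑ i ∈ s, (A i e : ℝ) * α i :=
  dif_pos rfl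

lemma extendCoeff_val (α : {i // i ≠ e} → ℝ) (a : {i // i ≠ e}) :
    extendCoeff A s α a = α a :=
  dif_neg a.2

lemma isCanonicalCoeff_extendCoeff (hA : A.IsSymm) (he : A e e = -1) (hcon : Contractible A e)
    {α : {i // i ≠ e} → ℝ} (hα : IsCanonicalCoeff (A.contract e) s α) :
    IsCanonicalCoeff A (liftInsert e s) (extendCoeff A s α) := by
  intro i hi
  rw [sum_liftInsert, extendCoeff_self]
  simp only [extendCoeff_val]
  by_cases hie : i = e
  · have hsym : ∀ a : {i // i ≠ e}, (A e a : ℝ) = A a e := fun a => by rw [hA.apply a e]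
    subst hie
    simp only [hsym, he]
    push_cast
    ring
  · have key := hα ⟨i, hie⟩ (mem_liftInsert_val.mp hi)
    have hsq : (A i e : ℝ) * A i e = A i e := by
      rcases hcon i hie with h | ⟨-, h⟩ <;> simp [h]
    simp only [contract, of_apply, Int.cast_add, Int.cast_mul, add_mul, Finset.sum_add_distrib,
      mul_assoc, ← Finset.mul_sum] at key
    linear_combination key - hsq

lemma adj_liftInsert (hA : A.IsSymm) {a : {i // i ≠ e}} (ha : a ∈ s) (hae : 0 < A a e) :
    ((sysGraph A).comap (Subtype.val : liftInsert e s → V)).Adj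
      ⟨a, mem_liftInsert_val.2 ha⟩ ⟨e, Finset.mem_insert_self _ _⟩ := by
  rw [SimpleGraph.comap_adj, sysGraph_adj_iff hA]
  exact ⟨a.2, hae⟩

lemma reachable_liftInsert (hA : A.IsSymm) (hoff : ∀ i j, i ≠ j → 0 ≤ A i j) {a b : s}
    (h : ((sysGraph (A.contract e)).comap (Subtype.val : s → {i // i ≠ e})).Reachable a b) :
    ((sysGraph A).comap (Subtype.val : liftInsert e s → V)).Reachable
      ⟨a.1, mem_liftInsert_val.2 a.2⟩ ⟨b.1, mem_liftInsert_val.2 b.2⟩ := by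
  rw [SimpleGraph.reachable_iff_reflTransGen] at h ⊢
  refine Relation.ReflTransGen.lift'
    (fun a : s => (⟨a.1, mem_liftInsert_val.2 a.2⟩ : liftInsert e s)) (fun a b hab => ?_) _ _ h
  rw [SimpleGraph.comap_adj, sysGraph_adj_iff (hA.contract e)] at hab
  obtain ⟨hne, hpos⟩ := hab
  by_cases hab : 0 < A a b
  · refine .single ?_
    rw [SimpleGraph.comap_adj, sysGraph_adj_iff hA]
    exact ⟨fun h => hne (Subtype.ext h), hab⟩
  · have hmul : 0 < A a e * A b e := by
      simp only [contract, of_apply] at hpos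
      omega
    have hae := pos_of_mul_pos_left hmul (hoff _ _ b.1.2)
    have hbe := pos_of_mul_pos_right hmul (hoff _ _ a.1.2)
    exact .tail (.single (adj_liftInsert hA a.2 hae)) (adj_liftInsert hA b.2 hbe).symm

variable [Fintype V]

lemma negDefMat_subMat_liftInsert (hA : A.IsSymm) (he : A e e = -1)
    (hs : NegDefMat (matReal (subMat (A.contract e) s))) :
    NegDefMat (matReal (subMat A (liftInsert e s))) := by
  rw [negDefMat_subMat_iff] at hs ⊢
  intro y hy hy0
  rw [dotProduct_mulVec_eq_contract_sub_sq hA he]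
  by_cases hx : (fun i : {i // i ≠ e} => y i) = 0
  · have hyx : ∀ i : {i // i ≠ e}, y i = 0 := congrFun hx
    have hye : y e ≠ 0 := fun h0 =>
      hy0 (funext fun j => if hj : j = e then hj ▸ h0 else hyx ⟨j, hj⟩)
    simpa [hyx] using sq_pos_of_ne_zero hye
  · have := hs _ (fun i hi => hy i (mt mem_liftInsert_val.mp hi)) hx
    nlinarith

lemma IsLogCanonical.contract (hlc : IsLogCanonical A) (hA : A.IsSymm)
    (hoff : ∀ i j, i ≠ j → 0 ≤ A i j) (he : A e e = -1) (hcon : Contractible A e) :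
    IsLogCanonical (A.contract e) := by
  intro s hs α hα
  obtain ⟨hge, hgt⟩ := hlc _ (negDefMat_subMat_liftInsert hA he hs) _
    (isCanonicalCoeff_extendCoeff hA he hcon hα)
  refine ⟨fun i hi => ?_, fun i f hf hif => ?_⟩
  · simpa [extendCoeff_val] using hge i (mem_liftInsert_val.2 hi)
  · have hreach := reachable_liftInsert hA hoff hif
    rw [← extendCoeff_val (A := A) (s := s) α]
    rcases hcon f f.1.2 with hfe | ⟨-, hfe⟩
    · exact hgt _ _ (by simpa [Matrix.contract, hfe] using hf) hreach
    · exact hgt _ _ he (hreach.trans (adj_liftInsert hA f.2 (by omega)).reachable)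

end LogCanonical

/-- Contraction preserves log canonicity: if `A` is a log canonical system indexed by
`Fin (n+1)` with `n ≥ 1`, and `e` is a contractible element of the first kind, then the
contracted matrix `Acon i j = A i j + A i e * A j e`, indexed by the indices different
from `e`, is again a (log canonical) system. -/
theorem contraction_preserves_logCanonical {n : ℕ} (hn : 1 ≤ n)
    (A : Matrix (Fin (n + 1)) (Fin (n + 1)) ℤ)
    (hsys : IsSystem A) (hlc : IsLogCanonical A)
    (e : Fin (n + 1)) (he : A e e = -1) (hcon : Contractible A e)
    (Acon : Matrix {i : Fin (n + 1) // i ≠ e} {i : Fin (n + 1) // i ≠ e} ℤ)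
    (hAcon : ∀ i j : {i : Fin (n + 1) // i ≠ e},
      Acon i j = A i.val j.val + A i.val e * A j.val e) :
    IsSystem Acon ∧ IsLogCanonical Acon := by
  obtain rfl : Acon = A.contract e := Matrix.ext hAcon
  have : Nontrivial (Fin (n + 1)) := Fin.nontrivial_iff_two_le.mpr (by omega)
  exact ⟨hsys.contract he hcon, hlc.contract hsys.2.1 hsys.2.2.2.1 he hcon⟩
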